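/- For every ε > 0, the set 𝒦_ε = {F ∈ 𝒮 : m(Indiff(F)) ≥ ε} is closed in (𝒮, dist), where m is the standard measure. -/

import Mathlib

open Set MeasureTheory Filter Topology

namespace SkewPaper

/-- A bi-infinite sequence over the alphabet `{1,…,N}` (modelled as `Fin N`) is allowed
by the 0-1 transition matrix `A`. -/
def Allowed {N : ℕ} (A : Fin N → Fin N → Bool) (ω : ℤ → Fin N) : Prop :=
  ∀ n : ℤ, A (ω n) (ω (n + 1)) = true

/-- The subshift of finite type `Σ ⊆ {1,…,N}^ℤ` determined by the transition matrix `A`,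
with the product (= metric `d(ω̄,ω) = 2^{-min{|n| : ω̄ₙ ≠ ωₙ}}`) topology. -/
abbrev Sig (N : ℕ) (A : Fin N → Fin N → Bool) : Type :=
  {ω : ℤ → Fin N // Allowed A ω}

variable {N : ℕ} {A : Fin N → Fin N → Bool}

/-- The left shift `σ : Σ → Σ`. -/
def shift (ω : Sig N A) : Sig N A :=
  ⟨fun n => ω.1 (n + 1), fun n => ω.2 (n + 1)⟩

/-- The inverse `σ⁻¹` of the left shift. -/
def shiftInv (ω : Sig N A) : Sig N A :=
  ⟨fun n => ω.1 (n - 1), fun n => by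
    show A (ω.1 (n - 1)) (ω.1 (n + 1 - 1)) = true
    have h := ω.2 (n - 1)
    have e1 : n - 1 + 1 = n := by ring
    have e2 : n + 1 - 1 = n := by ring
    rw [e1] at h; rw [e2]; exact h⟩

/-- Topological transitivity of the shift `σ` on `Σ`. -/
def ShiftTransitive (N : ℕ) (A : Fin N → Fin N → Bool) : Prop :=
  ∀ U V : Set (Sig N A), IsOpen U → IsOpen V → U.Nonempty → V.Nonempty →
    ∃ n : ℕ, ((shift (A := A))^[n] '' U ∩ V).Nonempty

/-- The class `𝒮` of skew products `F(ω,x) = (σω, f_ω(x))` over the subshift `Σ`,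
with fiber `I = [0,1]`.  The fiber maps `f_ω` (encoded as maps `ℝ → ℝ` whose behaviour
is prescribed on `I`) are orientation-preserving `C¹` diffeomorphisms sending `I`
strictly inside itself, with `C¹` inverses `fInv ω`, and `ω ↦ f_ω` is continuous in the
`C¹` sense. -/
structure SkewSys (N : ℕ) (A : Fin N → Fin N → Bool) where
  f : Sig N A → ℝ → ℝ
  fInv : Sig N A → ℝ → ℝ
  contDiff : ∀ ω, ContDiffOn ℝ 1 (f ω) (Icc 0 1)
  deriv_pos : ∀ ω, ∀ x ∈ Icc (0:ℝ) 1, 0 < derivWithin (f ω) (Icc 0 1) x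
  maps_in : ∀ ω, MapsTo (f ω) (Icc 0 1) (Ioo 0 1)
  leftInv : ∀ ω, ∀ x ∈ Icc (0:ℝ) 1, fInv ω (f ω x) = x
  inv_contDiff : ∀ ω, ContDiffOn ℝ 1 (fInv ω) (Icc 0 1)
  cont : ContinuousOn (fun p : Sig N A × ℝ => f p.1 p.2) (univ ×ˢ Icc 0 1)
  cont_deriv : ContinuousOn
    (fun p : Sig N A × ℝ => derivWithin (f p.1) (Icc 0 1) p.2) (univ ×ˢ Icc 0 1)
  inv_cont : ContinuousOn (fun p : Sig N A × ℝ => fInv p.1 p.2) (univ ×ˢ Icc 0 1)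
  inv_cont_deriv : ContinuousOn
    (fun p : Sig N A × ℝ => derivWithin (fInv p.1) (Icc 0 1) p.2) (univ ×ˢ Icc 0 1)

/-- The skew product map `F : Σ × ℝ → Σ × ℝ`, `(ω,x) ↦ (σω, f_ω(x))`. -/
def FMap (F : SkewSys N A) : Sig N A × ℝ → Sig N A × ℝ :=
  fun p => (shift p.1, F.f p.1 p.2)

/-- The phase space `Σ × I`, viewed inside `Σ × ℝ`. -/
def phaseSpace (N : ℕ) (A : Fin N → Fin N → Bool) : Set (Sig N A × ℝ) :=
  univ ×ˢ Icc 0 1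

/-- The graph of `γ` drifts up: `F(Γ) > Γ`, i.e. the graph function
`ω ↦ f_{σ⁻¹ω}(γ(σ⁻¹ω))` of `F(Γ)` is pointwise strictly above `γ`. -/
def DriftsUp (F : SkewSys N A) (γ : Sig N A → ℝ) : Prop :=
  ∀ ω, γ ω < F.f (shiftInv ω) (γ (shiftInv ω))

/-- The graph of `γ` drifts down: `F(Γ) < Γ`. -/
def DriftsDown (F : SkewSys N A) (γ : Sig N A → ℝ) : Prop :=
  ∀ ω, F.f (shiftInv ω) (γ (shiftInv ω)) < γ ω

/-- `Up(F)`: the set of points `p = (ω,x)` drifting up, i.e. such that there is a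
continuous `γ : Σ → I` whose graph drifts up with `γ(ω) < x < f_{σ⁻¹ω}(γ(σ⁻¹ω))`. -/
def Up (F : SkewSys N A) : Set (Sig N A × ℝ) :=
  {p | ∃ γ : Sig N A → ℝ, Continuous γ ∧ (∀ ω, γ ω ∈ Icc (0:ℝ) 1) ∧ DriftsUp F γ ∧
    γ p.1 < p.2 ∧ p.2 < F.f (shiftInv p.1) (γ (shiftInv p.1))}

/-- `Down(F)`: the set of points drifting down. -/
def Down (F : SkewSys N A) : Set (Sig N A × ℝ) :=
  {p | ∃ γ : Sig N A → ℝ, Continuous γ ∧ (∀ ω, γ ω ∈ Icc (0:ℝ) 1) ∧ DriftsDown F γ ∧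
    F.f (shiftInv p.1) (γ (shiftInv p.1)) < p.2 ∧ p.2 < γ p.1}

/-- The anchored set `Indiff(F) = (Σ × I) \ (Up(F) ∪ Down(F))`. -/
def Indiff (F : SkewSys N A) : Set (Sig N A × ℝ) :=
  phaseSpace N A \ (Up F ∪ Down F)

/-- The nonwandering set `Ω(F)`: points `p ∈ Σ × I` such that every neighborhood `U`
of `p` in `Σ × I` satisfies `F^n(U) ∩ U ≠ ∅` for some `n ≥ 1`. -/
def NonWandering (F : SkewSys N A) : Set (Sig N A × ℝ) :=
  {p | p ∈ phaseSpace N A ∧ ∀ U : Set (Sig N A × ℝ), IsOpen U → p ∈ U →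
    ∃ n : ℕ, 1 ≤ n ∧ ∃ q ∈ U ∩ phaseSpace N A, (FMap F)^[n] q ∈ U ∩ phaseSpace N A}

/-- The partial order `F ≺ F̃` on `𝒮`: `f_ω(x) < f̃_ω(x)` for all `ω ∈ Σ`, `x ∈ I`. -/
def Prec (F G : SkewSys N A) : Prop :=
  ∀ ω, ∀ x ∈ Icc (0:ℝ) 1, F.f ω x < G.f ω x

/-- A skew product is multistep if its fiber maps depend only on finitely many
coordinates `ω_{-m}, …, ω_m` of `ω`. -/
def Multistep (F : SkewSys N A) : Prop :=
  ∃ m : ℕ, ∀ ω ω' : Sig N A, (∀ n : ℤ, n.natAbs ≤ m → ω.1 n = ω'.1 n) → F.f ω = F.f ω'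

/-- The `C¹` distance `dist(F,F̃) = max_ω dist_{C¹}(f_ω^{±1}, f̃_ω^{±1})` on `𝒮`. -/
noncomputable def SDist (F G : SkewSys N A) : ℝ :=
  ⨆ p : Sig N A × Icc (0:ℝ) 1,
    max
      (max |F.f p.1 p.2 - G.f p.1 p.2|
        |derivWithin (F.f p.1) (Icc 0 1) p.2 - derivWithin (G.f p.1) (Icc 0 1) p.2|)
      (max |F.fInv p.1 p.2 - G.fInv p.1 p.2|
        |derivWithin (F.fInv p.1) (Icc 0 1) p.2 - derivWithin (G.fInv p.1) (Icc 0 1) p.2|)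

/-- The standard measure `m = μ × Leb` on `Σ × I` (with `Leb` Lebesgue measure
restricted to `I = [0,1]`). -/
noncomputable def stdMeasure (μ : Measure (Sig N A)) : Measure (Sig N A × ℝ) :=
  μ.prod (volume.restrict (Icc 0 1))

/-- A family `(F_τ)_{τ ∈ (a,b)}` in `𝒮` is monotone increasing if `F_{τ₁} ≺ F_{τ₂}`
whenever `τ₁ < τ₂`. -/
def MonoFam (F : ℝ → SkewSys N A) (a b : ℝ) : Prop :=
  ∀ τ₁ ∈ Ioo a b, ∀ τ₂ ∈ Ioo a b, τ₁ < τ₂ → Prec (F τ₁) (F τ₂)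

/-- A family `(F_τ)_{τ ∈ (a,b)}` in `𝒮` is continuous in `τ` for the metric `dist`. -/
def ContFam (F : ℝ → SkewSys N A) (a b : ℝ) : Prop :=
  ∀ τ ∈ Ioo a b, ∀ ε : ℝ, 0 < ε → ∃ δ > 0,
    ∀ τ' ∈ Ioo a b, |τ' - τ| < δ → SDist (F τ') (F τ) < ε

/-- The pushforward `Γ ↦ F(Γ)` on graph functions: the graph of `pushGraph F γ`,
namely `ω ↦ f_{σ⁻¹ω}(γ(σ⁻¹ω))`, is the image `F(Γ)` of the graph `Γ` of `γ`. -/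
def pushGraph (F : SkewSys N A) (γ : Sig N A → ℝ) : Sig N A → ℝ :=
  fun ω => F.f (shiftInv ω) (γ (shiftInv ω))

/-! Drifting is an open condition in the `C⁰` topology. If the graph `Γ` of a continuous
`γ` drifts up for `F`, the margin `f_{σ⁻¹ω}(γ(σ⁻¹ω)) - γ(ω)` is bounded below by some `c > 0`
on the compact `Σ`; every `G` with `dist(G,F)` below `c` and below the gap between `x` and
`F(Γ)` over `ω` still lifts `Γ` strictly and keeps `(ω,x)` between `Γ` and `G(Γ)`. So a
point anchored for infinitely many `Fₙ` is anchored for their limit `F`, and the reverse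
Fatou inequality `m(limsup Kₙ) ≥ limsup m(Kₙ)` for the finite measure `m` gives
`m(Indiff F) ≥ ε`. -/

theorem _root_.MeasureTheory.le_measure_limsup_atTop {α : Type*} [MeasurableSpace α]
    {μ : Measure α} [IsFiniteMeasure μ] {s : ℕ → Set α} (hs : ∀ n, NullMeasurableSet (s n) μ)
    {ε : ENNReal} (hε : ∀ n, ε ≤ μ (s n)) : ε ≤ μ (limsup s atTop) := by
  have htail : Antitone fun n => ⋃ i ≥ n, s i := fun m n hmn =>
    biUnion_subset_biUnion_left fun i hi => le_trans hmn hi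
  rw [limsup_eq_iInf_iSup_of_nat]
  simp only [iInf_eq_iInter, iSup_eq_iUnion]
  rw [htail.measure_iInter (fun n => .iUnion fun i => .iUnion fun _ => hs i)
    ⟨0, measure_ne_top _ _⟩]
  exact le_iInf fun n => (hε n).trans (measure_mono fun x hx => mem_iUnion₂.2 ⟨n, le_rfl, hx⟩)

theorem _root_.ContinuousOn.continuous_restrict_prod_Icc {Y : Type*} [TopologicalSpace Y]
    {h : Y × ℝ → ℝ} (hh : ContinuousOn h (univ ×ˢ Icc 0 1)) :
    Continuous fun p : Y × Icc (0:ℝ) 1 => h (p.1, p.2) :=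
  hh.comp_continuous (continuous_fst.prodMk (continuous_subtype_val.comp continuous_snd))
    fun p => ⟨mem_univ _, p.2.2⟩

theorem isClosed_setOf_allowed : IsClosed {ω : ℤ → Fin N | Allowed A ω} := by
  show IsClosed {ω : ℤ → Fin N | ∀ n, A (ω n) (ω (n + 1)) = true}
  rw [ofPred_forall]
  refine isClosed_iInter fun n => ?_
  exact IsClosed.preimage (f := fun ω : ℤ → Fin N => (ω n, ω (n + 1)))
    ((continuous_apply n).prodMk (continuous_apply (n + 1)))
    (isClosed_discrete {q : Fin N × Fin N | A q.1 q.2 = true})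

instance : CompactSpace (Sig N A) :=
  isCompact_iff_compactSpace.mp isClosed_setOf_allowed.isCompact

theorem continuous_shiftInv : Continuous (shiftInv : Sig N A → Sig N A) := by
  refine Continuous.subtype_mk ?_ _
  exact continuous_pi fun n => (continuous_apply (n - 1)).comp continuous_subtype_val

theorem continuous_pushGraph (F : SkewSys N A) {γ : Sig N A → ℝ} (hγ : Continuous γ)
    (hγI : ∀ ω, γ ω ∈ Icc (0:ℝ) 1) : Continuous (pushGraph F γ) :=
  F.cont.comp_continuous (continuous_shiftInv.prodMk (hγ.comp continuous_shiftInv))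
    fun _ => ⟨mem_univ _, hγI _⟩

theorem abs_f_sub_le_SDist (F G : SkewSys N A) (ω : Sig N A) {x : ℝ} (hx : x ∈ Icc (0:ℝ) 1) :
    |F.f ω x - G.f ω x| ≤ SDist F G := by
  refine le_trans ?_ (le_ciSup ((isCompact_range ?_).bddAbove) (ω, ⟨x, hx⟩))
  · exact (le_max_left _ _).trans (le_max_left _ _)
  · exact ((F.cont.continuous_restrict_prod_Icc.sub
        G.cont.continuous_restrict_prod_Icc).abs.max
      (F.cont_deriv.continuous_restrict_prod_Icc.sub
        G.cont_deriv.continuous_restrict_prod_Icc).abs).max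
      ((F.inv_cont.continuous_restrict_prod_Icc.sub
        G.inv_cont.continuous_restrict_prod_Icc).abs.max
      (F.inv_cont_deriv.continuous_restrict_prod_Icc.sub
        G.inv_cont_deriv.continuous_restrict_prod_Icc).abs)

theorem abs_pushGraph_sub_le_SDist (F G : SkewSys N A) {γ : Sig N A → ℝ}
    (hγI : ∀ ω, γ ω ∈ Icc (0:ℝ) 1) (ω : Sig N A) :
    |pushGraph G γ ω - pushGraph F γ ω| ≤ SDist G F :=
  abs_f_sub_le_SDist G F _ (hγI _)

theorem isOpen_up (F : SkewSys N A) : IsOpen (Up F) := by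
  refine isOpen_iff_forall_mem_open.2 fun p ⟨γ, hγ, hγI, hup, hp⟩ =>
    ⟨{q | γ q.1 < q.2 ∧ q.2 < pushGraph F γ q.1}, fun q hq => ⟨γ, hγ, hγI, hup, hq⟩, ?_, hp⟩
  exact (isOpen_lt (hγ.comp continuous_fst) continuous_snd).inter
    (isOpen_lt continuous_snd ((continuous_pushGraph F hγ hγI).comp continuous_fst))

theorem isOpen_down (F : SkewSys N A) : IsOpen (Down F) := by
  refine isOpen_iff_forall_mem_open.2 fun p ⟨γ, hγ, hγI, hdown, hp⟩ =>
    ⟨{q | pushGraph F γ q.1 < q.2 ∧ q.2 < γ q.1}, fun q hq => ⟨γ, hγ, hγI, hdown, hq⟩, ?_, hp⟩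
  exact (isOpen_lt ((continuous_pushGraph F hγ hγI).comp continuous_fst) continuous_snd).inter
    (isOpen_lt continuous_snd (hγ.comp continuous_fst))

theorem measurableSet_indiff (F : SkewSys N A) : MeasurableSet (Indiff F) :=
  (MeasurableSet.univ.prod measurableSet_Icc).diff
    ((isOpen_up F).union (isOpen_down F)).measurableSet

theorem eventually_mem_up {ι : Type*} {l : Filter ι} {Fs : ι → SkewSys N A} {F : SkewSys N A}
    (hF : Tendsto (fun i => SDist (Fs i) F) l (𝓝 0)) {p : Sig N A × ℝ} (hp : p ∈ Up F) :
    ∀ᶠ i in l, p ∈ Up (Fs i) := by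
  obtain ⟨γ, hγ, hγI, hup, hlo, hhi⟩ := hp
  change ∀ ω, γ ω < pushGraph F γ ω at hup
  change p.2 < pushGraph F γ p.1 at hhi
  obtain ⟨c, hc, hcγ⟩ := isCompact_univ.exists_forall_le' (a := 0)
    (f := fun ω => pushGraph F γ ω - γ ω)
    ((continuous_pushGraph F hγ hγI).sub hγ).continuousOn fun ω _ => sub_pos.2 (hup ω)
  obtain ⟨r, hr, hrc, hrp⟩ : ∃ r > 0, r ≤ c ∧ r ≤ pushGraph F γ p.1 - p.2 :=
    ⟨_, lt_min hc (sub_pos.2 hhi), min_le_left _ _, min_le_right _ _⟩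
  filter_upwards [hF.eventually (gt_mem_nhds hr)] with i hi
  have hclose : ∀ ω, pushGraph F γ ω - r < pushGraph (Fs i) γ ω := fun ω => by
    linarith [(abs_lt.1 ((abs_pushGraph_sub_le_SDist F (Fs i) hγI ω).trans_lt hi)).1]
  refine ⟨γ, hγ, hγI, fun ω => ?_, hlo, ?_⟩
  · show γ ω < pushGraph (Fs i) γ ω
    linarith [hclose ω, hcγ ω (mem_univ ω)]
  · show p.2 < pushGraph (Fs i) γ p.1
    linarith [hclose p.1]

theorem eventually_mem_down {ι : Type*} {l : Filter ι} {Fs : ι → SkewSys N A} {F : SkewSys N A}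
    (hF : Tendsto (fun i => SDist (Fs i) F) l (𝓝 0)) {p : Sig N A × ℝ} (hp : p ∈ Down F) :
    ∀ᶠ i in l, p ∈ Down (Fs i) := by
  obtain ⟨γ, hγ, hγI, hdown, hlo, hhi⟩ := hp
  change ∀ ω, pushGraph F γ ω < γ ω at hdown
  change pushGraph F γ p.1 < p.2 at hlo
  obtain ⟨c, hc, hcγ⟩ := isCompact_univ.exists_forall_le' (a := 0)
    (f := fun ω => γ ω - pushGraph F γ ω)
    (hγ.sub (continuous_pushGraph F hγ hγI)).continuousOn fun ω _ => sub_pos.2 (hdown ω)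
  obtain ⟨r, hr, hrc, hrp⟩ : ∃ r > 0, r ≤ c ∧ r ≤ p.2 - pushGraph F γ p.1 :=
    ⟨_, lt_min hc (sub_pos.2 hlo), min_le_left _ _, min_le_right _ _⟩
  filter_upwards [hF.eventually (gt_mem_nhds hr)] with i hi
  have hclose : ∀ ω, pushGraph (Fs i) γ ω < pushGraph F γ ω + r := fun ω => by
    linarith [(abs_lt.1 ((abs_pushGraph_sub_le_SDist F (Fs i) hγI ω).trans_lt hi)).2]
  refine ⟨γ, hγ, hγI, fun ω => ?_, ?_, hhi⟩
  · show pushGraph (Fs i) γ ω < γ ω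
    linarith [hclose ω, hcγ ω (mem_univ ω)]
  · show pushGraph (Fs i) γ p.1 < p.2
    linarith [hclose p.1]

theorem limsup_indiff_subset {ι : Type*} {l : Filter ι} {Fs : ι → SkewSys N A}
    {F : SkewSys N A} (hF : Tendsto (fun i => SDist (Fs i) F) l (𝓝 0)) :
    limsup (fun i => Indiff (Fs i)) l ⊆ Indiff F := by
  intro p hp
  rw [mem_limsup_iff_frequently_mem] at hp
  obtain ⟨i, hi⟩ := hp.exists
  refine ⟨hi.1, ?_⟩
  rintro (hup | hdown)
  · obtain ⟨j, hup_j, hind_j⟩ := ((eventually_mem_up hF hup).and_frequently hp).exists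
    exact hind_j.2 (Or.inl hup_j)
  · obtain ⟨j, hdown_j, hind_j⟩ := ((eventually_mem_down hF hdown).and_frequently hp).exists
    exact hind_j.2 (Or.inr hdown_j)

instance (μ : Measure (Sig N A)) [IsFiniteMeasure μ] : IsFiniteMeasure (stdMeasure μ) := by
  unfold stdMeasure
  infer_instance

theorem K_eps_closed_general {N : ℕ} {A : Fin N → Fin N → Bool}
    (μ : Measure (Sig N A)) [IsProbabilityMeasure μ]
    (ε : ENNReal)
    (F : SkewSys N A) (Fs : ℕ → SkewSys N A)
    (hmem : ∀ n, ε ≤ stdMeasure μ (Indiff (Fs n)))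
    (hF : Tendsto (fun n => SDist (Fs n) F) atTop (𝓝 0)) :
    ε ≤ stdMeasure μ (Indiff F) :=
  (le_measure_limsup_atTop (fun n => (measurableSet_indiff (Fs n)).nullMeasurableSet) hmem).trans
    (measure_mono (limsup_indiff_subset hF))

/-- For every `ε > 0`, the set `𝒦_ε = {F : m(Indiff(F)) ≥ ε}` is closed
in `(𝒮, dist)` (stated as sequential closedness for the metric `SDist`). -/
theorem K_eps_closed {N : ℕ} {A : Fin N → Fin N → Bool} (hN : 2 ≤ N)
    (htrans : ShiftTransitive N A)
    (μ : Measure (Sig N A)) [IsProbabilityMeasure μ]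
    (herg : Ergodic (shift : Sig N A → Sig N A) μ)
    (ε : ENNReal) (hε : 0 < ε)
    (F : SkewSys N A) (Fs : ℕ → SkewSys N A)
    (hmem : ∀ n, ε ≤ stdMeasure μ (Indiff (Fs n)))
    (hF : Tendsto (fun n => SDist (Fs n) F) atTop (𝓝 0)) :
    ε ≤ stdMeasure μ (Indiff F) :=
  K_eps_closed_general μ ε F Fs hmem hF

end SkewPaper
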